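/- For b, m ∈ (0,1) with b + m ≤ 1 and any w ∈ [0,1], the normalized geometric-mean probability satisfies p_geo(w) = b^w m^{1-w} / (b^w m^{1-w} + (1-b)^w (1-m)^{1-w}) ≤ max(b, m). In particular, if both b ≤ 1/2 and m ≤ 1/2, then p_geo(w) ≤ 1/2 for all w, so the prior never infers a regulatory link when both data sources give probability at most 1/2. -/

import Mathlib

/-!
Passing to odds turns the normalized geometric mean into a plain weighted geometric mean:
the odds of `p_geo(w)` are `(b/(1-b))^w (m/(1-m))^(1-w)`, which is at most the larger of
the two odds, and since `t ↦ t/(1-t)` is increasing this is the odds of `max b m`.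
-/

open Real

lemma rpow_mul_rpow_one_sub_le_max {x y w : ℝ} (hx : 0 ≤ x) (hy : 0 ≤ y)
    (hw : w ∈ Set.Icc (0:ℝ) 1) : x ^ w * y ^ (1 - w) ≤ max x y :=
  calc x ^ w * y ^ (1 - w) ≤ w * x + (1 - w) * y :=
        geom_mean_le_arith_mean2_weighted hw.1 (by linarith [hw.2]) hx hy (by ring)
    _ ≤ w * max x y + (1 - w) * max x y :=
        add_le_add (mul_le_mul_of_nonneg_left (le_max_left x y) hw.1)
          (mul_le_mul_of_nonneg_left (le_max_right x y) (by linarith [hw.2]))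
    _ = max x y := by ring

lemma odds_le_odds {s t : ℝ} (hs : 0 ≤ s) (hst : s ≤ t) (ht : t < 1) :
    s / (1 - s) ≤ t / (1 - t) :=
  div_le_div₀ (hs.trans hst) hst (by linarith) (by linarith)

lemma div_add_le_iff_div_le_odds {G H p : ℝ} (hG : 0 < G) (hH : 0 < H) (hp : p < 1) :
    G / (G + H) ≤ p ↔ G / H ≤ p / (1 - p) := by
  rw [div_le_iff₀ (by linarith), div_le_div_iff₀ hH (by linarith)]
  constructor <;> intro h <;> linarith

lemma geomMean_div_geomMean_eq_odds {b m w : ℝ} (hb : b ∈ Set.Ioo (0:ℝ) 1)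
    (hm : m ∈ Set.Ioo (0:ℝ) 1) :
    b ^ w * m ^ (1 - w) / ((1 - b) ^ w * (1 - m) ^ (1 - w)) =
      (b / (1 - b)) ^ w * (m / (1 - m)) ^ (1 - w) := by
  rw [div_rpow hb.1.le (by linarith [hb.2]), div_rpow hm.1.le (by linarith [hm.2]),
    mul_div_mul_comm]

lemma normalized_geomMean_le_max {b m w : ℝ} (hb : b ∈ Set.Ioo (0:ℝ) 1)
    (hm : m ∈ Set.Ioo (0:ℝ) 1) (hw : w ∈ Set.Icc (0:ℝ) 1) :
    b ^ w * m ^ (1 - w) / (b ^ w * m ^ (1 - w) + (1 - b) ^ w * (1 - m) ^ (1 - w))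
      ≤ max b m := by
  have hG : 0 < b ^ w * m ^ (1 - w) := by have := hb.1; have := hm.1; positivity
  have hH : 0 < (1 - b) ^ w * (1 - m) ^ (1 - w) := by
    have : 0 < 1 - b := by linarith [hb.2]
    have : 0 < 1 - m := by linarith [hm.2]
    positivity
  have hmax : max b m < 1 := max_lt hb.2 hm.2
  rw [div_add_le_iff_div_le_odds hG hH hmax, geomMean_div_geomMean_eq_odds hb hm]
  calc (b / (1 - b)) ^ w * (m / (1 - m)) ^ (1 - w)
        ≤ max (b / (1 - b)) (m / (1 - m)) :=
          rpow_mul_rpow_one_sub_le_max (div_nonneg hb.1.le (by linarith [hb.2]))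
            (div_nonneg hm.1.le (by linarith [hm.2])) hw
    _ ≤ max b m / (1 - max b m) :=
          max_le (odds_le_odds hb.1.le (le_max_left b m) hmax)
            (odds_le_odds hm.1.le (le_max_right b m) hmax)

theorem geometric_prior_sparsity_general
    (b m : ℝ) (hb : b ∈ Set.Ioo (0:ℝ) 1) (hm : m ∈ Set.Ioo (0:ℝ) 1)
    (pgeo : ℝ → ℝ)
    (hgeo : ∀ w : ℝ, pgeo w = b ^ w * m ^ (1 - w) /
          (b ^ w * m ^ (1 - w) + (1 - b) ^ w * (1 - m) ^ (1 - w))) :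
    (∀ w ∈ Set.Icc (0:ℝ) 1, pgeo w ≤ max b m) ∧
    (b ≤ 1 / 2 → m ≤ 1 / 2 → ∀ w ∈ Set.Icc (0:ℝ) 1, pgeo w ≤ 1 / 2) := by
  have hle_max : ∀ w ∈ Set.Icc (0:ℝ) 1, pgeo w ≤ max b m := fun w hw =>
    (hgeo w).trans_le (normalized_geomMean_le_max hb hm hw)
  exact ⟨hle_max, fun hb2 hm2 w hw => (hle_max w hw).trans (max_le hb2 hm2)⟩

/-- If b + m ≤ 1 then the normalized geometric-mean probability is at most
max(b,m) for every weight w ∈ [0,1]; in particular if b ≤ 1/2 and m ≤ 1/2 then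
p_geo(w) ≤ 1/2, so the prior never infers a regulatory link when both data
sources give probability at most 1/2. -/
theorem geometric_prior_sparsity
    (b m : ℝ) (hb : b ∈ Set.Ioo (0:ℝ) 1) (hm : m ∈ Set.Ioo (0:ℝ) 1)
    (hbm : b + m ≤ 1)
    (pgeo : ℝ → ℝ)
    (hgeo : ∀ w : ℝ, pgeo w = b ^ w * m ^ (1 - w) /
          (b ^ w * m ^ (1 - w) + (1 - b) ^ w * (1 - m) ^ (1 - w))) :
    (∀ w ∈ Set.Icc (0:ℝ) 1, pgeo w ≤ max b m) ∧
    (b ≤ 1 / 2 → m ≤ 1 / 2 → ∀ w ∈ Set.Icc (0:ℝ) 1, pgeo w ≤ 1 / 2) :=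
  geometric_prior_sparsity_general b m hb hm pgeo hgeo
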